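/- Let P be a Poisson conformal superalgebra and let L be a parity-graded H-submodule of P closed under the λ-bracket, i.e., [L_λ L] ⊆ L[λ]. Then (i) the map ρ_λ(a, x) = [a_λ x], for a ∈ L and x ∈ P, is a conformal representation of L on P, and (ii) the parity-preserving sesqui-linear map φ_λ(a, x) = λ (a_λ x) satisfies the cocycle equation φ_{λ+μ}([a_λ b], x) = φ_λ(a, ρ_μ(b, x)) + ρ_λ(a, φ_μ(b, x)) − (−1)^{|a||b|} φ_μ(b, ρ_λ(a, x)) − (−1)^{|a||b|} ρ_μ(b, φ_λ(a, x)) for homogeneous a, b ∈ L and all x ∈ P. -/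

import Mathlib

open Finsupp

noncomputable section

variable (k : Type) [Field k] [CharZero k]

section Base

variable {M N : Type} [AddCommGroup M] [Module k M] [AddCommGroup N] [Module k N]

/-- Multiplication by `λ` on `M[λ] := ℕ →₀ M`. -/
def lamMul : (ℕ →₀ M) →ₗ[k] (ℕ →₀ M) := Finsupp.lmapDomain M k Nat.succ

/-- Apply a linear map to every coefficient of a polynomial. -/
def cw (f : M →ₗ[k] N) : (ℕ →₀ M) →ₗ[k] (ℕ →₀ N) := Finsupp.mapRange.linearMap f

/-- The constant-polynomial embedding `M → M[λ]`. -/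
def cst : M →ₗ[k] (ℕ →₀ M) := Finsupp.lsingle 0

/-- Multiplication by `λ` on `M[λ,μ] := ℕ →₀ (ℕ →₀ M)` (outer variable `μ`, inner `λ`). -/
def lamMul2 : (ℕ →₀ (ℕ →₀ M)) →ₗ[k] (ℕ →₀ (ℕ →₀ M)) := cw k (lamMul k)

/-- Multiplication by `μ` on `M[λ,μ]`. -/
def muMul2 : (ℕ →₀ (ℕ →₀ M)) →ₗ[k] (ℕ →₀ (ℕ →₀ M)) := Finsupp.lmapDomain (ℕ →₀ M) k Nat.succ

/-- The constant embedding `M → M[λ,μ]`. -/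
def cst2 : M →ₗ[k] (ℕ →₀ (ℕ →₀ M)) := (cst k).comp (cst k)

/-- Interchange of the two variables of `M[λ,μ]`. -/
def swapVar : (ℕ →₀ (ℕ →₀ M)) →ₗ[k] (ℕ →₀ (ℕ →₀ M)) :=
  Finsupp.lsum k fun n => cw k (Finsupp.lsingle n)

/-- The substitution `λ ↦ -∂-λ` on `M[λ]`, where `∂` acts on `M` via `D`. -/
def substNeg (D : M →ₗ[k] M) : (ℕ →₀ M) →ₗ[k] (ℕ →₀ M) :=
  Finsupp.lsum k fun n => ((-(cw k D) - lamMul k) ^ n) ∘ₗ cst k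

/-- The substitution `ν ↦ λ+μ` from `M[ν]` to `M[λ,μ]`. -/
def substAdd : (ℕ →₀ M) →ₗ[k] (ℕ →₀ (ℕ →₀ M)) :=
  Finsupp.lsum k fun n => ((lamMul2 k + muMul2 k) ^ n) ∘ₗ cst2 k

end Base
section Ops

variable {A B C V W L P : Type} [AddCommGroup A] [Module k A] [AddCommGroup B] [Module k B]
  [AddCommGroup C] [Module k C] [AddCommGroup V] [Module k V] [AddCommGroup W] [Module k W]
  [AddCommGroup L] [Module k L] [AddCommGroup P] [Module k P]

/-- `P_λ(a, Q_μ(b, c))`, an element of `W[λ,μ]` (outer variable `μ`, inner `λ`). -/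
def opComp (F : A →ₗ[k] C →ₗ[k] (ℕ →₀ W)) (G : B →ₗ[k] V →ₗ[k] (ℕ →₀ C))
    (a : A) (b : B) (c : V) : ℕ →₀ (ℕ →₀ W) := cw k (F a) (G b c)

/-- `Q_μ(b, P_λ(a, c))`, an element of `W[λ,μ]` (outer variable `μ`, inner `λ`). -/
def opCompSwap (F : B →ₗ[k] C →ₗ[k] (ℕ →₀ W)) (G : A →ₗ[k] V →ₗ[k] (ℕ →₀ C))
    (b : B) (a : A) (c : V) : ℕ →₀ (ℕ →₀ W) := swapVar k (cw k (F b) (G a c))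

/-- `Q_{λ+μ}(P_λ(a, b), c)`, an element of `W[λ,μ]` (outer variable `μ`, inner `λ`). -/
def opSubst (F : A →ₗ[k] B →ₗ[k] (ℕ →₀ C)) (G : C →ₗ[k] V →ₗ[k] (ℕ →₀ W))
    (a : A) (b : B) (c : V) : ℕ →₀ (ℕ →₀ W) :=
  Finsupp.lsum k (fun n => ((lamMul2 k (M := W)) ^ n) ∘ₗ substAdd k) (cw k (G.flip c) (F a b))

end Ops

/-- The Koszul sign `(-1)^{|a||b|}` attached to parities `i`, `j`. -/
def sgn (i j : ZMod 2) : ℤ := if i = 1 ∧ j = 1 then -1 else 1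

section Structures

variable {A B C L V P : Type} [AddCommGroup A] [Module k A] [AddCommGroup B] [Module k B]
  [AddCommGroup C] [Module k C]
  [AddCommGroup L] [Module k L] [AddCommGroup V] [Module k V] [AddCommGroup P] [Module k P]

/-- A `ℤ₂`-graded module over `H = k[∂]`, where `∂` acts via `D`:
the two graded components are complementary and `∂`-invariant. -/
structure IsGradedHMod (D : L →ₗ[k] L) (par : ZMod 2 → Submodule k L) : Prop where
  sup_eq_top : par 0 ⊔ par 1 = ⊤
  inf_eq_bot : par 0 ⊓ par 1 = ⊥
  map_d : ∀ i a, a ∈ par i → D a ∈ par i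

/-- Sesqui-linearity of a pairing `A ⊗ B → C[λ]` with respect to the `∂`-actions
`DA`, `DB`, `DC`: `F(∂a, b) = -λ F(a,b)` and `F(a, ∂b) = (∂+λ) F(a,b)`. -/
structure IsSesqui (DA : A →ₗ[k] A) (DB : B →ₗ[k] B) (DC : C →ₗ[k] C)
    (F : A →ₗ[k] B →ₗ[k] (ℕ →₀ C)) : Prop where
  dleft : ∀ a b, F (DA a) b = -(lamMul k (F a b))
  dright : ∀ a b, F a (DB b) = cw k DC (F a b) + lamMul k (F a b)

/-- A Lie conformal superalgebra structure on the `H`-module `L` (with `∂` acting via `D`)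
with `ℤ₂`-grading `par` and `λ`-bracket `Br`. -/
structure IsLieConfSuper (D : L →ₗ[k] L) (par : ZMod 2 → Submodule k L)
    (Br : L →ₗ[k] L →ₗ[k] (ℕ →₀ L)) : Prop where
  graded : IsGradedHMod k D par
  sesqui : IsSesqui k D D D Br
  parity : ∀ i j a b, a ∈ par i → b ∈ par j → ∀ n, Br a b n ∈ par (i + j)
  skew : ∀ i j a b, a ∈ par i → b ∈ par j → Br a b = -(sgn i j • substNeg k D (Br b a))
  jacobi : ∀ i j a b c, a ∈ par i → b ∈ par j →
    opComp k Br Br a b c = opSubst k Br Br a b c + sgn i j • opCompSwap k Br Br b a c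

/-- A Poisson conformal superalgebra structure on the `H`-module `P`, with `λ`-bracket `Br`
and conformally associative, supercommutative product `Ml`, linked by the conformal
Leibniz rule. -/
structure IsPoissonConfSuper (D : P →ₗ[k] P) (par : ZMod 2 → Submodule k P)
    (Br Ml : P →ₗ[k] P →ₗ[k] (ℕ →₀ P)) : Prop where
  lie : IsLieConfSuper k D par Br
  mul_sesqui : IsSesqui k D D D Ml
  mul_parity : ∀ i j a b, a ∈ par i → b ∈ par j → ∀ n, Ml a b n ∈ par (i + j)
  assoc : ∀ a b c, opComp k Ml Ml a b c = opSubst k Ml Ml a b c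
  comm : ∀ i j a b, a ∈ par i → b ∈ par j → Ml a b = sgn i j • substNeg k D (Ml b a)
  leibniz : ∀ i j a b c, a ∈ par i → b ∈ par j →
    opComp k Br Ml a b c = opSubst k Br Ml a b c + sgn i j • opCompSwap k Ml Br b a c

/-- A conformal representation of the Lie conformal superalgebra `(L, D, par, Br)` on the
`ℤ₂`-graded `H`-module `(V, DV, parV)`. -/
structure IsConfRep (D : L →ₗ[k] L) (par : ZMod 2 → Submodule k L)
    (Br : L →ₗ[k] L →ₗ[k] (ℕ →₀ L)) (DV : V →ₗ[k] V) (parV : ZMod 2 → Submodule k V)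
    (ρ : L →ₗ[k] V →ₗ[k] (ℕ →₀ V)) : Prop where
  sesqui : IsSesqui k D DV DV ρ
  parity : ∀ i j a x, a ∈ par i → x ∈ parV j → ∀ n, ρ a x n ∈ parV (i + j)
  jacobi : ∀ i j a b x, a ∈ par i → b ∈ par j →
    opComp k ρ ρ a b x - sgn i j • opCompSwap k ρ ρ b a x = opSubst k Br ρ a b x

/-- Finiteness of an `H`-module: it is generated, as a `k[∂]`-module, by finitely
many elements. -/
def IsHFinite (DV : V →ₗ[k] V) : Prop :=
  ∃ s : Finset V, ∀ W : Submodule k V, (∀ x ∈ W, DV x ∈ W) → (↑s : Set V) ⊆ ↑W → W = ⊤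

/-- The Lie conformal superalgebra `(L, D, par, Br)` admits a finite faithful conformal
representation. -/
def HasFFR (D : L →ₗ[k] L) (par : ZMod 2 → Submodule k L)
    (Br : L →ₗ[k] L →ₗ[k] (ℕ →₀ L)) : Prop :=
  ∃ (V : Type) (_ : AddCommGroup V) (_ : Module k V) (DV : V →ₗ[k] V)
    (parV : ZMod 2 → Submodule k V) (ρ : L →ₗ[k] V →ₗ[k] (ℕ →₀ V)),
    IsGradedHMod k DV parV ∧ IsConfRep k D par Br DV parV ρ ∧ IsHFinite k DV ∧
      ∀ a : L, a ≠ 0 → ρ a ≠ 0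

/-- `ρ` (defined on the ambient space `P`) restricts to a conformal representation of the
Lie conformal subalgebra `L ≤ P` (with ambient `λ`-bracket `Br`) on `(V, DV, parV)`. -/
def IsConfRepOn (D : P →ₗ[k] P) (par : ZMod 2 → Submodule k P)
    (Br : P →ₗ[k] P →ₗ[k] (ℕ →₀ P)) (L : Submodule k P)
    (DV : V →ₗ[k] V) (parV : ZMod 2 → Submodule k V)
    (ρ : P →ₗ[k] V →ₗ[k] (ℕ →₀ V)) : Prop :=
  (∀ a ∈ L, ∀ x, ρ (D a) x = -(lamMul k (ρ a x))) ∧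
  (∀ a ∈ L, ∀ x, ρ a (DV x) = cw k DV (ρ a x) + lamMul k (ρ a x)) ∧
  (∀ i j, ∀ a ∈ L ⊓ par i, ∀ x ∈ parV j, ∀ n, ρ a x n ∈ parV (i + j)) ∧
  (∀ i j, ∀ a ∈ L ⊓ par i, ∀ b ∈ L ⊓ par j, ∀ x,
    opComp k ρ ρ a b x - sgn i j • opCompSwap k ρ ρ b a x = opSubst k Br ρ a b x)

end Structures
section Extension

variable {A B W V : Type} [AddCommGroup A] [Module k A] [AddCommGroup B] [Module k B]
  [AddCommGroup W] [Module k W] [AddCommGroup V] [Module k V]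

/-- The sesqui-linear extension of a pairing `F : A ⊗ B → W[λ]` to a pairing
`(H ⊗ A) ⊗ (H ⊗ B) → W[λ]` (where `H ⊗ A` is realized as `ℕ →₀ A`, the index recording
the power of `∂`): `F(∂^n a, ∂^m b) = (-λ)^n (∂+λ)^m F(a, b)`, where `∂` acts on `W[λ]`
coefficientwise via `DW`. -/
def extSesqui (DW : W →ₗ[k] W) (F : A →ₗ[k] B →ₗ[k] (ℕ →₀ W)) :
    (ℕ →₀ A) →ₗ[k] (ℕ →₀ B) →ₗ[k] (ℕ →₀ W) :=
  Finsupp.lsum k fun n =>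
    (Finsupp.lsum (R := k) k).toLinearMap.comp <| LinearMap.pi fun m =>
      (LinearMap.llcomp k B (ℕ →₀ W) (ℕ →₀ W)
        (((-(lamMul k (M := W))) ^ n) * ((cw k DW + lamMul k) ^ m))).comp F

/-- The action of `∂` on `H ⊗ V`, realized as `ℕ →₀ V`. -/
def DD (V : Type) [AddCommGroup V] [Module k V] : (ℕ →₀ V) →ₗ[k] (ℕ →₀ V) :=
  Finsupp.lmapDomain V k Nat.succ

/-- The canonical embedding `V → H ⊗ V`. -/
def emb (V : Type) [AddCommGroup V] [Module k V] : V →ₗ[k] (ℕ →₀ V) :=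
  Finsupp.lsingle 0

/-- A grading of `V` lifts coefficientwise to a grading of `H ⊗ V = ℕ →₀ V`. -/
def liftPar {V : Type} [AddCommGroup V] [Module k V] (par : ZMod 2 → Submodule k V)
    (i : ZMod 2) : Submodule k (ℕ →₀ V) where
  carrier := { f | ∀ n, f n ∈ par i }
  add_mem' := fun hf hg n => by
    simpa only [Finsupp.add_apply] using add_mem (hf n) (hg n)
  zero_mem' := fun n => by simp
  smul_mem' := fun c f hf n => by
    simpa only [Finsupp.smul_apply] using Submodule.smul_mem _ c (hf n)

end Extension

section Super

variable (p : Type) [NonUnitalRing p] [Module k p] [SMulCommClass k p p] [IsScalarTower k p p]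

/-- An (ordinary) Poisson superalgebra structure on the `ℤ₂`-graded associative
supercommutative algebra `p`, with super Lie bracket `br`. -/
structure IsPoissonSuper (par : ZMod 2 → Submodule k p) (br : p →ₗ[k] p →ₗ[k] p) : Prop where
  sup_eq_top : par 0 ⊔ par 1 = ⊤
  inf_eq_bot : par 0 ⊓ par 1 = ⊥
  mul_mem : ∀ i j (a b : p), a ∈ par i → b ∈ par j → a * b ∈ par (i + j)
  mul_scomm : ∀ i j (a b : p), a ∈ par i → b ∈ par j → a * b = sgn i j • (b * a)
  br_mem : ∀ i j a b, a ∈ par i → b ∈ par j → br a b ∈ par (i + j)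
  br_skew : ∀ i j a b, a ∈ par i → b ∈ par j → br a b = -(sgn i j • br b a)
  br_jacobi : ∀ i j a b c, a ∈ par i → b ∈ par j →
    br a (br b c) = br (br a b) c + sgn i j • br b (br a c)
  leibniz : ∀ i j a b c, a ∈ par i → b ∈ par j →
    br a (b * c) = br a b * c + sgn i j • (b * br a c)

/-- An even derivation of the Poisson superalgebra `(p, par, br)`. -/
structure IsEvenDerivation (par : ZMod 2 → Submodule k p) (br : p →ₗ[k] p →ₗ[k] p)
    (d : p →ₗ[k] p) : Prop where
  even : ∀ i a, a ∈ par i → d a ∈ par i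
  map_mul : ∀ a b, d (a * b) = d a * b + a * d b
  map_br : ∀ a b, d (br a b) = br (d a) b + br a (d b)

/-- Base pairing `a ⊗ b ↦ a b` (constant in `λ`) for the current/quadratic constructions. -/
def curMul0 : p →ₗ[k] p →ₗ[k] (ℕ →₀ (ℕ →₀ p)) :=
  (LinearMap.mul k p).compr₂ ((cst k).comp (emb k p))

/-- Base pairing `a ⊗ b ↦ {a, b}` (constant in `λ`) for the current construction. -/
def curBr0 (br : p →ₗ[k] p →ₗ[k] p) : p →ₗ[k] p →ₗ[k] (ℕ →₀ (ℕ →₀ p)) :=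
  br.compr₂ ((cst k).comp (emb k p))

/-- Base pairing `a ⊗ b ↦ {a, b} + ∂ (d a · b) + λ d(a b)` of the Poisson conformal
superalgebra `L(p, d)`. -/
def qua0 (br : p →ₗ[k] p →ₗ[k] p) (d : p →ₗ[k] p) : p →ₗ[k] p →ₗ[k] (ℕ →₀ (ℕ →₀ p)) :=
  br.compr₂ ((cst k).comp (emb k p))
    + ((LinearMap.mul k p).comp d).compr₂ ((cst k).comp ((DD k p).comp (emb k p)))
    + ((LinearMap.mul k p).compr₂ d).compr₂ ((lamMul k).comp ((cst k).comp (emb k p)))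

/-- The multiplication `(a ∂^n)_λ (b ∂^m) = (-λ)^n (∂+λ)^m (a b)` on `H ⊗ p`. -/
def LpdMul : (ℕ →₀ p) →ₗ[k] (ℕ →₀ p) →ₗ[k] (ℕ →₀ (ℕ →₀ p)) :=
  extSesqui k (DD k p) (curMul0 k p)

/-- The `λ`-bracket of the current Poisson conformal superalgebra `Cur p`. -/
def CurBr (br : p →ₗ[k] p →ₗ[k] p) : (ℕ →₀ p) →ₗ[k] (ℕ →₀ p) →ₗ[k] (ℕ →₀ (ℕ →₀ p)) :=
  extSesqui k (DD k p) (curBr0 k p br)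

/-- The `λ`-bracket of the Poisson conformal superalgebra `L(p, d)`. -/
def LpdBr (br : p →ₗ[k] p →ₗ[k] p) (d : p →ₗ[k] p) :
    (ℕ →₀ p) →ₗ[k] (ℕ →₀ p) →ₗ[k] (ℕ →₀ (ℕ →₀ p)) :=
  extSesqui k (DD k p) (qua0 k p br d)

/-- The twisted action `ρ̂_λ(a, u) = [a_λ u] + λ (a_λ u)` on `L(p, d)`. -/
def LpdRho (br : p →ₗ[k] p →ₗ[k] p) (d : p →ₗ[k] p) :
    (ℕ →₀ p) →ₗ[k] (ℕ →₀ p) →ₗ[k] (ℕ →₀ (ℕ →₀ p)) :=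
  LpdBr k p br d + (LpdMul k p).compr₂ (lamMul k)

end Super

/-!
Part (i) is the conformal Jacobi identity of `P`, read as the axiom of a representation.
For part (ii) put `S = ([a_λ b]_{λ+μ} x)` and `ε = (-1)^{|a||b|}`. The Leibniz rule gives
`[a_λ (b_μ x)] = S + ε (b_μ [a_λ x])`; the Leibniz rule for the pair `b, a`, rewritten by
skew-symmetry of the bracket and sesqui-linearity of the product, gives
`(a_λ [b_μ x]) = S + ε [b_μ (a_λ x)]`. Multiplying the first identity by `μ`, the second by `λ`
and adding yields `(λ+μ) S`, which is the cocycle equation.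
-/

section PolynomialOperators

omit [CharZero k]

variable {M N : Type} [AddCommGroup M] [Module k M] [AddCommGroup N] [Module k N]

@[simp]
lemma lamMul_single (n : ℕ) (x : M) : lamMul k (single n x) = single (n + 1) x := by
  simp [lamMul]

@[simp]
lemma cw_single (f : M →ₗ[k] N) (n : ℕ) (x : M) : cw k f (single n x) = single n (f x) := by
  simp [cw]

@[simp]
lemma lamMul2_single (n : ℕ) (v : ℕ →₀ M) :
    lamMul2 k (single n v) = single n (lamMul k v) := by
  simp [lamMul2]

@[simp]
lemma muMul2_single (n : ℕ) (v : ℕ →₀ M) : muMul2 k (single n v) = single (n + 1) v := by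
  simp [muMul2]

@[simp]
lemma swapVar_single_single (m n : ℕ) (x : M) :
    swapVar k (single m (single n x)) = single n (single m x) := by
  simp [swapVar, cw]

lemma cw_comp {W : Type} [AddCommGroup W] [Module k W] (f : N →ₗ[k] W) (g : M →ₗ[k] N)
    (v : ℕ →₀ M) : cw k (f ∘ₗ g) v = cw k f (cw k g v) :=
  LinearMap.congr_fun (Finsupp.mapRange.linearMap_comp f g) v

lemma cw_lamMul (f : M →ₗ[k] (ℕ →₀ N)) (v : ℕ →₀ M) :
    cw k f (lamMul k v) = muMul2 k (cw k f v) := by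
  have h : cw k f ∘ₗ lamMul k = muMul2 k ∘ₗ cw k f := by ext; simp
  exact LinearMap.congr_fun h v

lemma swapVar_swapVar (v : ℕ →₀ (ℕ →₀ M)) : swapVar k (swapVar k v) = v := by
  have h : swapVar k ∘ₗ swapVar k = (LinearMap.id : (ℕ →₀ (ℕ →₀ M)) →ₗ[k] _) := by
    ext; simp
  exact LinearMap.congr_fun h v

lemma swapVar_lamMul2 (v : ℕ →₀ (ℕ →₀ M)) :
    swapVar k (lamMul2 k v) = muMul2 k (swapVar k v) := by
  have h : swapVar k ∘ₗ lamMul2 k = muMul2 k ∘ₗ (swapVar k : (ℕ →₀ (ℕ →₀ M)) →ₗ[k] _) := by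
    ext; simp
  exact LinearMap.congr_fun h v

lemma swapVar_muMul2 (v : ℕ →₀ (ℕ →₀ M)) :
    swapVar k (muMul2 k v) = lamMul2 k (swapVar k v) := by
  simpa [swapVar_swapVar] using (congrArg (swapVar k) (swapVar_lamMul2 k (swapVar k v))).symm

lemma commute_lamMul2_muMul2 : Commute (lamMul2 k (M := M)) (muMul2 k) := by
  ext; simp

def sumMul2 : (ℕ →₀ (ℕ →₀ M)) →ₗ[k] (ℕ →₀ (ℕ →₀ M)) := lamMul2 k + muMul2 k

lemma sumMul2_apply (v : ℕ →₀ (ℕ →₀ M)) : sumMul2 k v = lamMul2 k v + muMul2 k v := rfl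

lemma commute_lamMul2_sumMul2 : Commute (lamMul2 k (M := M)) (sumMul2 k) :=
  (Commute.refl _).add_right (commute_lamMul2_muMul2 k)

lemma substAdd_single (n : ℕ) (x : M) :
    substAdd k (single n x) = (sumMul2 k ^ n) (cst2 k x) := by
  simp [substAdd, sumMul2]

lemma substAdd_lamMul (v : ℕ →₀ M) :
    substAdd k (lamMul k v) = sumMul2 k (substAdd k v) := by
  have h : substAdd k ∘ₗ lamMul k = sumMul2 k ∘ₗ (substAdd k : (ℕ →₀ M) →ₗ[k] _) := by
    refine Finsupp.lhom_ext fun n x => ?_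
    simp only [LinearMap.comp_apply, lamMul_single, substAdd_single, pow_succ',
      Module.End.mul_apply]
  exact LinearMap.congr_fun h v

lemma swapVar_substAdd (v : ℕ →₀ M) : swapVar k (substAdd k v) = substAdd k v := by
  have h : swapVar k ∘ₗ substAdd k = (substAdd k : (ℕ →₀ M) →ₗ[k] _) := by
    refine Finsupp.lhom_ext fun n x => ?_
    simp only [LinearMap.comp_apply, substAdd_single]
    induction n with
    | zero => simp [cst2, cst]
    | succ n ih =>
      rw [pow_succ', Module.End.mul_apply, sumMul2_apply, map_add, swapVar_lamMul2,
        swapVar_muMul2, ih, add_comm]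
  exact LinearMap.congr_fun h v

def negDSubLam (D : M →ₗ[k] M) : (ℕ →₀ M) →ₗ[k] (ℕ →₀ M) := -(cw k D) - lamMul k

lemma substNeg_single (D : M →ₗ[k] M) (n : ℕ) (x : M) :
    substNeg k D (single n x) = ((negDSubLam k D) ^ n) (single 0 x) := by
  simp [substNeg, negDSubLam, cst]

/-- `applyAtSum g f = g_{λ+μ}(f(λ))`: `g` is applied to the coefficients of `f ∈ M[λ]` and its
own variable is specialized to `λ+μ`. -/
def applyAtSum (g : M →ₗ[k] (ℕ →₀ N)) : (ℕ →₀ M) →ₗ[k] (ℕ →₀ (ℕ →₀ N)) :=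
  (Finsupp.lsum k fun n => (lamMul2 k ^ n) ∘ₗ substAdd k) ∘ₗ cw k g

lemma applyAtSum_single (g : M →ₗ[k] (ℕ →₀ N)) (n : ℕ) (x : M) :
    applyAtSum k g (single n x) = (lamMul2 k ^ n) (substAdd k (g x)) := by
  simp [applyAtSum]

lemma applyAtSum_lamMul_comp (g : M →ₗ[k] (ℕ →₀ N)) (f : ℕ →₀ M) :
    applyAtSum k (lamMul k ∘ₗ g) f = sumMul2 k (applyAtSum k g f) := by
  have h : applyAtSum k (lamMul k ∘ₗ g) = sumMul2 k ∘ₗ applyAtSum k g := by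
    refine Finsupp.lhom_ext fun n x => ?_
    rw [LinearMap.comp_apply, applyAtSum_single, applyAtSum_single, LinearMap.comp_apply,
      substAdd_lamMul, ← Module.End.mul_apply, ((commute_lamMul2_sumMul2 k).pow_left n).eq,
      Module.End.mul_apply]
  exact LinearMap.congr_fun h f

lemma applyAtSum_negDSubLam (D : M →ₗ[k] M) (g : M →ₗ[k] (ℕ →₀ N))
    (hg : ∀ c, g (D c) = -lamMul k (g c)) (f : ℕ →₀ M) :
    applyAtSum k g (negDSubLam k D f) = muMul2 k (applyAtSum k g f) := by
  have h : applyAtSum k g ∘ₗ negDSubLam k D = muMul2 k ∘ₗ applyAtSum k g := by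
    refine Finsupp.lhom_ext fun n x => ?_
    have hcomm : Commute (lamMul2 k ^ n) (muMul2 k (M := N)) :=
      (commute_lamMul2_muMul2 k).pow_left n
    simp only [LinearMap.comp_apply, negDSubLam, LinearMap.sub_apply, LinearMap.neg_apply,
      cw_single, lamMul_single, map_sub, map_neg, applyAtSum_single, hg, substAdd_lamMul]
    rw [sumMul2_apply, map_add, ← Module.End.mul_apply (lamMul2 k ^ n) (muMul2 k (M := N)),
      hcomm.eq, pow_succ, Module.End.mul_apply, Module.End.mul_apply]
    abel
  exact LinearMap.congr_fun h f

lemma swapVar_muMul2_pow (m : ℕ) (w : ℕ →₀ (ℕ →₀ M)) :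
    swapVar k ((muMul2 k ^ m) w) = (lamMul2 k ^ m) (swapVar k w) := by
  induction m with
  | zero => simp
  | succ m ih =>
    rw [pow_succ', pow_succ', Module.End.mul_apply, Module.End.mul_apply, swapVar_muMul2, ih]

lemma applyAtSum_negDSubLam_pow (D : M →ₗ[k] M) (g : M →ₗ[k] (ℕ →₀ N))
    (hg : ∀ c, g (D c) = -lamMul k (g c)) (m : ℕ) (f : ℕ →₀ M) :
    applyAtSum k g ((negDSubLam k D ^ m) f) = (muMul2 k ^ m) (applyAtSum k g f) := by
  induction m with
  | zero => simp
  | succ m ih =>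
    rw [pow_succ', pow_succ', Module.End.mul_apply, Module.End.mul_apply,
      applyAtSum_negDSubLam k D g hg, ih]

lemma swapVar_applyAtSum_substNeg (D : M →ₗ[k] M) (g : M →ₗ[k] (ℕ →₀ N))
    (hg : ∀ c, g (D c) = -lamMul k (g c)) (f : ℕ →₀ M) :
    swapVar k (applyAtSum k g (substNeg k D f)) = applyAtSum k g f := by
  have h : swapVar k ∘ₗ applyAtSum k g ∘ₗ substNeg k D = applyAtSum k g := by
    refine Finsupp.lhom_ext fun n x => ?_
    rw [LinearMap.comp_apply, LinearMap.comp_apply, substNeg_single,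
      applyAtSum_negDSubLam_pow k D g hg, swapVar_muMul2_pow, applyAtSum_single,
      applyAtSum_single, pow_zero, Module.End.one_apply, swapVar_substAdd]
  exact LinearMap.congr_fun h f

end PolynomialOperators

section Operations

omit [CharZero k]

variable {A B C V W : Type} [AddCommGroup A] [Module k A] [AddCommGroup B] [Module k B]
  [AddCommGroup C] [Module k C] [AddCommGroup V] [Module k V] [AddCommGroup W] [Module k W]

lemma opCompSwap_eq_swapVar_opComp (F : B →ₗ[k] C →ₗ[k] (ℕ →₀ W))
    (G : A →ₗ[k] V →ₗ[k] (ℕ →₀ C)) (b : B) (a : A) (c : V) :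
    opCompSwap k F G b a c = swapVar k (opComp k F G b a c) := rfl

lemma opComp_compr₂_lamMul_left (F : A →ₗ[k] C →ₗ[k] (ℕ →₀ W))
    (G : B →ₗ[k] V →ₗ[k] (ℕ →₀ C)) (a : A) (b : B) (c : V) :
    opComp k (F.compr₂ (lamMul k)) G a b c = lamMul2 k (opComp k F G a b c) :=
  cw_comp k (lamMul k) (F a) (G b c)

lemma opComp_compr₂_lamMul_right (F : A →ₗ[k] C →ₗ[k] (ℕ →₀ W))
    (G : B →ₗ[k] V →ₗ[k] (ℕ →₀ C)) (a : A) (b : B) (c : V) :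
    opComp k F (G.compr₂ (lamMul k)) a b c = muMul2 k (opComp k F G a b c) :=
  cw_lamMul k (F a) (G b c)

lemma opCompSwap_compr₂_lamMul_left (F : B →ₗ[k] C →ₗ[k] (ℕ →₀ W))
    (G : A →ₗ[k] V →ₗ[k] (ℕ →₀ C)) (b : B) (a : A) (c : V) :
    opCompSwap k (F.compr₂ (lamMul k)) G b a c = muMul2 k (opCompSwap k F G b a c) := by
  rw [opCompSwap_eq_swapVar_opComp, opComp_compr₂_lamMul_left, swapVar_lamMul2,
    opCompSwap_eq_swapVar_opComp]

lemma opCompSwap_compr₂_lamMul_right (F : B →ₗ[k] C →ₗ[k] (ℕ →₀ W))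
    (G : A →ₗ[k] V →ₗ[k] (ℕ →₀ C)) (b : B) (a : A) (c : V) :
    opCompSwap k F (G.compr₂ (lamMul k)) b a c = lamMul2 k (opCompSwap k F G b a c) := by
  rw [opCompSwap_eq_swapVar_opComp, opComp_compr₂_lamMul_right, swapVar_muMul2,
    opCompSwap_eq_swapVar_opComp]

lemma opSubst_eq_applyAtSum (F : A →ₗ[k] B →ₗ[k] (ℕ →₀ C)) (G : C →ₗ[k] V →ₗ[k] (ℕ →₀ W))
    (a : A) (b : B) (c : V) : opSubst k F G a b c = applyAtSum k (G.flip c) (F a b) := rfl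

lemma opSubst_compr₂_lamMul (F : A →ₗ[k] B →ₗ[k] (ℕ →₀ C)) (G : C →ₗ[k] V →ₗ[k] (ℕ →₀ W))
    (a : A) (b : B) (c : V) :
    opSubst k F (G.compr₂ (lamMul k)) a b c = sumMul2 k (opSubst k F G a b c) :=
  applyAtSum_lamMul_comp k (G.flip c) (F a b)

lemma swapVar_opSubst_of_skew (D : C →ₗ[k] C) (F : A →ₗ[k] A →ₗ[k] (ℕ →₀ C))
    (G : C →ₗ[k] V →ₗ[k] (ℕ →₀ W)) (hG : ∀ c x, G (D c) x = -lamMul k (G c x))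
    (s : ℤ) (a b : A) (hF : F b a = -(s • substNeg k D (F a b))) (x : V) :
    swapVar k (opSubst k F G b a x) = -(s • opSubst k F G a b x) := by
  rw [opSubst_eq_applyAtSum, hF, map_neg, map_zsmul, map_neg, map_zsmul,
    swapVar_applyAtSum_substNeg k D (G.flip x) (fun c => hG c x), opSubst_eq_applyAtSum]

end Operations

lemma sgn_comm (i j : ZMod 2) : sgn i j = sgn j i := by
  simp only [sgn, and_comm]

lemma sgn_smul_sgn_smul {α : Type*} [AddCommGroup α] (i j : ZMod 2) (v : α) :
    sgn i j • sgn i j • v = v := by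
  unfold sgn; split_ifs <;> simp

section ConformalAlgebras

variable {k} {P : Type} [AddCommGroup P] [Module k P] {D : P →ₗ[k] P}
  {par : ZMod 2 → Submodule k P} {Br Ml : P →ₗ[k] P →ₗ[k] (ℕ →₀ P)}

omit [CharZero k]

theorem IsLieConfSuper.isConfRepOn_adjoint (hBr : IsLieConfSuper k D par Br)
    (L : Submodule k P) : IsConfRepOn k D par Br L D par Br := by
  refine ⟨fun a _ x => hBr.sesqui.dleft a x, fun a _ x => hBr.sesqui.dright a x,
    fun i j a ha x hx => hBr.parity i j a x (Submodule.mem_inf.mp ha).2 hx, ?_⟩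
  intro i j a ha b hb x
  rw [hBr.jacobi i j a b x (Submodule.mem_inf.mp ha).2 (Submodule.mem_inf.mp hb).2]
  abel

theorem IsPoissonConfSuper.leibniz_right (hP : IsPoissonConfSuper k D par Br Ml)
    {i j : ZMod 2} {a b : P} (ha : a ∈ par i) (hb : b ∈ par j) (x : P) :
    opComp k Ml Br a b x = opSubst k Br Ml a b x + sgn i j • opCompSwap k Br Ml b a x := by
  have hswap : swapVar k (opSubst k Br Ml b a x) = -(sgn j i • opSubst k Br Ml a b x) :=
    swapVar_opSubst_of_skew k D Br Ml hP.mul_sesqui.dleft _ a b (hP.lie.skew j i b a hb ha) x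
  have hleib := congrArg (swapVar k) (hP.leibniz j i b a x hb ha)
  rw [map_add, map_zsmul, hswap, opCompSwap_eq_swapVar_opComp, swapVar_swapVar,
    ← opCompSwap_eq_swapVar_opComp, sgn_comm j i] at hleib
  rw [hleib, smul_add, smul_neg, sgn_smul_sgn_smul, sgn_smul_sgn_smul]
  abel

end ConformalAlgebras

theorem regular_representation_and_cocycle
    (P : Type) [AddCommGroup P] [Module k P]
    (D : P →ₗ[k] P) (par : ZMod 2 → Submodule k P)
    (Br Ml : P →ₗ[k] P →ₗ[k] (ℕ →₀ P))
    (hP : IsPoissonConfSuper k D par Br Ml)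
    (L : Submodule k P) :
    IsConfRepOn k D par Br L D par Br ∧
      (∀ i j, ∀ a ∈ L ⊓ par i, ∀ b ∈ L ⊓ par j, ∀ x : P,
        opSubst k Br (Ml.compr₂ (lamMul k)) a b x
          = opComp k (Ml.compr₂ (lamMul k)) Br a b x
            + opComp k Br (Ml.compr₂ (lamMul k)) a b x
            - sgn i j • opCompSwap k (Ml.compr₂ (lamMul k)) Br b a x
            - sgn i j • opCompSwap k Br (Ml.compr₂ (lamMul k)) b a x) := by
  refine ⟨hP.lie.isConfRepOn_adjoint L, fun i j a ha b hb x => ?_⟩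
  have hai : a ∈ par i := (Submodule.mem_inf.mp ha).2
  have hbj : b ∈ par j := (Submodule.mem_inf.mp hb).2
  rw [opSubst_compr₂_lamMul, opComp_compr₂_lamMul_left, opComp_compr₂_lamMul_right,
    opCompSwap_compr₂_lamMul_left, opCompSwap_compr₂_lamMul_right,
    hP.leibniz_right hai hbj x, hP.leibniz i j a b x hai hbj, sumMul2_apply]
  simp only [map_add, map_zsmul]
  abel
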